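/- Let n ≥ 1 be an integer. For every (x,y) ∈ [0,1]², the configuration c_(x,y) : ℤ² → (ℤ³)⁴ defined by c_(x,y)(i,j) = TILE_n(x + iβ⁻¹, y + jβ⁻¹) is a valid tiling of the plane by the metallic mean Wang tile set 𝒯_n: every tile c_(x,y)(i,j) belongs to 𝒯_n, the right label of c_(x,y)(i,j) equals the left label of c_(x,y)(i+1,j), and the top label of c_(x,y)(i,j) equals the bottom label of c_(x,y)(i,j+1), for all (i,j) ∈ ℤ². -/

import Mathlib

open scoped BigOperators

namespace MetallicMean

/-- A 3-dimensional integer vector. -/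
abbrev Vec3 := ℤ × ℤ × ℤ

/-- A Wang tile is a quadruple (right, top, left, bottom) of labels. -/
abbrev Tile := Vec3 × Vec3 × Vec3 × Vec3

def right (τ : Tile) : Vec3 := τ.1
def top (τ : Tile) : Vec3 := τ.2.1
def left (τ : Tile) : Vec3 := τ.2.2.1
def bottom (τ : Tile) : Vec3 := τ.2.2.2

/-- Reflection of a tile by the positive diagonal: (r,t,ℓ,b) ↦ (t,r,b,ℓ). -/
def reflect (τ : Tile) : Tile := (top τ, right τ, bottom τ, left τ)

/-- The set V_n of admissible labels. -/
def Vset (n : ℤ) : Set Vec3 :=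
  {v | 0 ≤ v.1 ∧ v.1 ≤ v.2.1 ∧ v.2.1 ≤ v.2.2 ∧ v.2.2 ≤ n + 1 ∧ v.2.1 ≤ 1}

/-- The function θ_n. -/
def theta (n : ℤ) (u v : Vec3) : Vec3 :=
  (u.1,
   if u.1 = 0 then v.2.2 - n else 1,
   if v.1 = 0 then v.2.1 + u.1 else u.2.2 + 1)

/-- The set 𝒞_n of instances of the θ_n-chip. -/
def Cset (n : ℤ) : Set Tile :=
  {τ | ∃ u v : Vec3, u ∈ Vset n ∧ v ∈ Vset n ∧
      theta n u v ∈ Vset n ∧ theta n v u ∈ Vset n ∧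
      τ = (theta n u v, theta n v u, u, v)}

/-- The n-th metallic mean β, the positive root of x² - nx - 1. -/
noncomputable def beta (n : ℤ) : ℝ := ((n : ℝ) + Real.sqrt ((n : ℝ) ^ 2 + 4)) / 2

/-- The conjugate root β* = n - β = -β⁻¹. -/
noncomputable def betaStar (n : ℤ) : ℝ := (n : ℝ) - beta n

/-- The coding map Λ_n. -/
noncomputable def Lam (n : ℤ) (x y : ℝ) : Vec3 :=
  (⌊y + betaStar n + 1⌋,
   ⌊(beta n)⁻¹ * x + y + betaStar n + 1⌋,
   ⌊beta n * x + y + betaStar n + 1⌋)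

/-- The Wang tile TILE_n(x, y), written as (right, top, left, bottom). -/
noncomputable def TileAt (n : ℤ) (x y : ℝ) : Tile :=
  (Lam n (Int.fract x) (Int.fract y),
   Lam n (Int.fract y) (Int.fract x),
   Lam n (Int.fract (x + betaStar n)) (Int.fract y),
   Lam n (Int.fract (y + betaStar n)) (Int.fract x))

/-- The metallic mean Wang tile set 𝒯_n = {TILE_n(x,y) : (x,y) ∈ [0,1]²}. -/
def Tset (n : ℤ) : Set Tile :=
  {τ | ∃ x y : ℝ, x ∈ Set.Icc (0 : ℝ) 1 ∧ y ∈ Set.Icc (0 : ℝ) 1 ∧ τ = TileAt n x y}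

/-- A configuration assigns a tile to every position of ℤ². -/
abbrev Config := ℤ × ℤ → Tile

/-- A configuration is valid w.r.t. a set `S` of Wang tiles if all its tiles are in `S`
and contiguous edges of adjacent tiles match. -/
def IsValid (S : Set Tile) (w : Config) : Prop :=
  (∀ p : ℤ × ℤ, w p ∈ S) ∧
  ∀ p : ℤ × ℤ,
    right (w p) = left (w (p + (1, 0))) ∧
    top (w p) = bottom (w (p + (0, 1)))

/-- The Wang shift Ω_S of all valid configurations over `S`. -/
def OmegaOf (S : Set Tile) : Set Config := {w | IsValid S w}

/-- The shift ℤ²-action on configurations: (σ^k w)(p) = w(p + k). -/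
def shift (k : ℤ × ℤ) (w : Config) : Config := fun p => w (p + k)

end MetallicMean

namespace MetallicMean

/-- White tiles. -/
def whiteT (n : ℤ) : Set Tile :=
  {τ | ∃ i j : ℤ, 1 ≤ i ∧ i ≤ n ∧ 1 ≤ j ∧ j ≤ n ∧
    τ = ((1, 1, i + 1), (1, 1, j + 1), (1, 1, i), (1, 1, j))}

/-- Horizontal blue tiles (0 ≤ i ≤ n - 1). -/
def blueHT (n : ℤ) : Set Tile :=
  {τ | ∃ i : ℤ, 0 ≤ i ∧ i ≤ n - 1 ∧
    τ = ((0, 0, i + 1), (1, 1, 1), (0, 0, i), (1, 1, n))}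

/-- Horizontal yellow tiles. -/
def yellowH (n : ℤ) : Set Tile :=
  {τ | ∃ i : ℤ, 1 ≤ i ∧ i ≤ n ∧
    τ = ((0, 1, i + 1), (1, 1, 2), (0, 1, i), (1, 1, n + 1))}

/-- Horizontal green tiles. -/
def greenH (n : ℤ) : Set Tile :=
  {τ | ∃ i : ℤ, 0 ≤ i ∧ i ≤ n ∧
    τ = ((0, 1, i + 1), (1, 1, 1), (0, 0, i), (1, 1, n + 1))}

/-- The three vectors indexing junction tiles. -/
def junctionVecs (n : ℤ) : Set Vec3 := {(0, 0, n), (0, 1, n), (0, 1, n + 1)}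

/-- The 7 junction tiles (excluding the two pairs ((0,0,n),(0,1,n+1)) and
((0,1,n+1),(0,0,n))). -/
def junctionT (n : ℤ) : Set Tile :=
  {τ | ∃ u v : Vec3, u ∈ junctionVecs n ∧ v ∈ junctionVecs n ∧
    ¬(u = (0, 0, n) ∧ v = (0, 1, n + 1)) ∧ ¬(u = (0, 1, n + 1) ∧ v = (0, 0, n)) ∧
    τ = ((0, v.2.2 - n, v.2.1), (0, u.2.2 - n, u.2.1), u, v)}

/-- The metallic mean Wang tile set 𝒯_n, given by its explicit description. -/
def TsetExplicit (n : ℤ) : Set Tile :=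
  whiteT n ∪ blueHT n ∪ yellowH n ∪ greenH n ∪
    reflect '' blueHT n ∪ reflect '' yellowH n ∪ reflect '' greenH n ∪ junctionT n

end MetallicMean

namespace MetallicMean

/-!
Only fractional parts enter `TILE_n`, so it is enough to take `x, y ∈ [0, 1)`, and neighbouring
edges match because `x + β⁻¹ + β* = x`. For `x, y ∈ [0, 1)` the identities `β β⁻¹ = 1` and
`β = n + β⁻¹` make every label explicit: its entries are decided by comparing `x` and `y` with
`β⁻¹`, and `s = βx + y`, `t = βy + x` with `β⁻¹`, `1` and `1 + β⁻¹`, except for the indices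
`⌊s - β⁻¹⌋` and `⌊t - β⁻¹⌋` of the white and horizontal tiles. The lines `x = β⁻¹` and
`y = β⁻¹` cut `[0, 1)²` into the regions of white, horizontal, vertical (by the symmetry
`TILE(x, y) = reflect TILE(y, x)`) and junction tiles; in the last one, `s ≤ βt` and `t ≤ βs`
rule out the label `(0, 0, n + 1)`.
-/

section Floor

variable {R : Type*} [Field R] [LinearOrder R] [IsStrictOrderedRing R] [FloorRing R]

lemma floor_eq_ite_of_nonneg_of_lt_two {a : R} (h0 : 0 ≤ a) (h2 : a < 2) :
    ⌊a⌋ = if 1 ≤ a then 1 else 0 := by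
  split_ifs with h <;> rw [Int.floor_eq_iff] <;> push_cast <;> constructor <;> linarith

lemma floor_add_one_eq_ite {a : R} (h0 : -1 ≤ a) (h1 : a < 1) :
    ⌊a⌋ + 1 = if 0 ≤ a then 1 else 0 := by
  rw [← Int.floor_add_one]
  split_ifs with h <;> rw [Int.floor_eq_iff] <;> push_cast <;> constructor <;> linarith

lemma fract_sub_eq_of_le {x c : R} (hc : 0 ≤ c) (hcx : c ≤ x) (hx : x < 1) :
    Int.fract (x - c) = x - c :=
  Int.fract_eq_self.2 ⟨by linarith, by linarith⟩

lemma fract_sub_eq_of_lt {x c : R} (hx : 0 ≤ x) (hxc : x < c) (hc : c ≤ 1) :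
    Int.fract (x - c) = x + 1 - c :=
  Int.fract_eq_iff.2 ⟨by linarith, by linarith, -1, by push_cast; ring⟩

lemma fract_fract_add (a b : R) : Int.fract (Int.fract a + b) = Int.fract (a + b) := by
  rw [← Int.fract_add_intCast _ ⌊a⌋, add_right_comm, Int.fract_add_floor]

end Floor

lemma mem_horizontal_of_ite {n i : ℤ} {P Q : Prop} [Decidable P] [Decidable Q] (hQP : Q → P)
    (hi0 : 0 ≤ i) (hin : i ≤ n) (hP : ¬P → i ≤ n - 1) (hQ : Q → 1 ≤ i) :
    (((0 : ℤ), (if P then 1 else 0 : ℤ), i + 1), ((1 : ℤ), (1 : ℤ), (if Q then 1 else 0 : ℤ) + 1),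
      ((0 : ℤ), (if Q then 1 else 0 : ℤ), i), ((1 : ℤ), (1 : ℤ), n + (if P then 1 else 0 : ℤ)))
      ∈ blueHT n ∪ yellowH n ∪ greenH n := by
  by_cases hp : P
  · by_cases hq : Q
    · exact Or.inl (Or.inr ⟨i, hQ hq, hin, by simp [hp, hq]⟩)
    · exact Or.inr ⟨i, hi0, hin, by simp [hp, hq]⟩
  · exact Or.inl (Or.inl ⟨i, hi0, hP hp, by simp [hp, mt hQP hp]⟩)

lemma mem_junctionT_of_ite {n : ℤ} {P Q R S : Prop} [Decidable P] [Decidable Q] [Decidable R]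
    [Decidable S] (hQP : Q → P) (hSR : S → R) (hSP : S → P) (hQR : Q → R) :
    (((0 : ℤ), (if S then 1 else 0 : ℤ), (if R then 1 else 0 : ℤ)),
      ((0 : ℤ), (if Q then 1 else 0 : ℤ), (if P then 1 else 0 : ℤ)),
      ((0 : ℤ), (if P then 1 else 0 : ℤ), n + (if Q then 1 else 0 : ℤ)),
      ((0 : ℤ), (if R then 1 else 0 : ℤ), n + (if S then 1 else 0 : ℤ))) ∈ junctionT n := by
  refine ⟨(0, if P then 1 else 0, n + if Q then 1 else 0),
    (0, if R then 1 else 0, n + if S then 1 else 0), ?_, ?_, ?_, ?_, by simp⟩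
  · by_cases hp : P <;> by_cases hq : Q <;> simp_all [junctionVecs]
  · by_cases hr : R <;> by_cases hs : S <;> simp_all [junctionVecs]
  · by_cases hp : P <;> by_cases hs : S <;> simp_all
  · by_cases hq : Q <;> by_cases hr : R <;> simp_all

section Beta

variable (n : ℤ)

lemma beta_pos : 0 < beta n := by
  have h : |(n : ℝ)| < √((n : ℝ) ^ 2 + 4) := by
    rw [← Real.sqrt_sq_eq_abs]
    exact Real.sqrt_lt_sqrt (sq_nonneg _) (by linarith)
  unfold beta
  linarith [neg_abs_le (n : ℝ)]

lemma beta_mul_inv : beta n * (beta n)⁻¹ = 1 := mul_inv_cancel₀ (beta_pos n).ne'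

lemma inv_beta_pos : 0 < (beta n)⁻¹ := inv_pos.2 (beta_pos n)

lemma beta_eq_add_inv : beta n = n + (beta n)⁻¹ := by
  have hsq : beta n ^ 2 = n * beta n + 1 := by
    have := Real.sq_sqrt (show (0 : ℝ) ≤ (n : ℝ) ^ 2 + 4 by positivity)
    unfold beta
    linear_combination this / 4
  field_simp [(beta_pos n).ne']
  linear_combination hsq

lemma betaStar_eq : betaStar n = -(beta n)⁻¹ := by
  unfold betaStar
  linarith [beta_eq_add_inv n]

variable {n}

lemma inv_beta_lt_one (hn : 1 ≤ n) : (beta n)⁻¹ < 1 := by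
  refine inv_lt_one_of_one_lt₀ ?_
  have : (1 : ℝ) ≤ n := by exact_mod_cast hn
  linarith [beta_eq_add_inv n, inv_beta_pos n]

end Beta

lemma TileAt_fract (n : ℤ) (x y : ℝ) : TileAt n (Int.fract x) (Int.fract y) = TileAt n x y := by
  simp only [TileAt, Int.fract_fract, fract_fract_add]

lemma right_TileAt_eq_left (n : ℤ) (x y : ℝ) :
    right (TileAt n x y) = left (TileAt n (x + (beta n)⁻¹) y) := by
  simp only [right, left, TileAt, betaStar_eq, add_neg_cancel_right]

section Labels

variable {n : ℤ}

local notation "β" => beta n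

lemma Lam_eq (hn : 1 ≤ n) {x y : ℝ} (hx0 : 0 ≤ x) (hx1 : x < 1) (hy0 : 0 ≤ y) (hy1 : y < 1) :
    Lam n x y =
      (if β⁻¹ ≤ y then 1 else 0, if 1 ≤ β * y + x then 1 else 0, ⌊β * x + y - β⁻¹⌋ + 1) := by
  have he0 := inv_beta_pos n
  have he1 := inv_beta_lt_one hn
  have hex : β⁻¹ * x < β⁻¹ := mul_lt_of_lt_one_right he0 hx1
  have hex0 : 0 ≤ β⁻¹ * x := by positivity
  have hcond : 1 ≤ β * y + x ↔ β⁻¹ ≤ β⁻¹ * x + y := by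
    rw [← sub_nonneg, ← sub_nonneg (a := β⁻¹ * x + y),
      show β * y + x - 1 = β * (β⁻¹ * x + y - β⁻¹) by linear_combination (1 - x) * beta_mul_inv n,
      mul_nonneg_iff_of_pos_left (beta_pos n)]
  simp only [Lam, betaStar_eq, hcond, ← sub_eq_add_neg]
  refine Prod.ext ?_ (Prod.ext ?_ ?_)
  · split_ifs <;> rw [Int.floor_eq_iff] <;> push_cast <;> constructor <;> linarith
  · split_ifs <;> rw [Int.floor_eq_iff] <;> push_cast <;> constructor <;> linarith
  · exact Int.floor_add_one _

lemma TileAt_eq_right_left (x y : ℝ) :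
    TileAt n x y =
      (right (TileAt n x y), right (TileAt n y x), left (TileAt n x y), left (TileAt n y x)) :=
  rfl

lemma right_TileAt (hn : 1 ≤ n) {x y : ℝ} (hx0 : 0 ≤ x) (hx1 : x < 1) (hy0 : 0 ≤ y) (hy1 : y < 1) :
    right (TileAt n x y) =
      (if β⁻¹ ≤ y then 1 else 0, if 1 ≤ β * y + x then 1 else 0, ⌊β * x + y - β⁻¹⌋ + 1) := by
  change Lam n (Int.fract x) (Int.fract y) = _
  rw [Int.fract_eq_self.2 ⟨hx0, hx1⟩, Int.fract_eq_self.2 ⟨hy0, hy1⟩,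
    Lam_eq hn hx0 hx1 hy0 hy1]

lemma left_TileAt_of_le (hn : 1 ≤ n) {x y : ℝ} (hx : β⁻¹ ≤ x) (hx1 : x < 1) (hy0 : 0 ≤ y)
    (hy1 : y < 1) :
    left (TileAt n x y) =
      (if β⁻¹ ≤ y then 1 else 0, if 1 + β⁻¹ ≤ β * y + x then 1 else 0, ⌊β * x + y - β⁻¹⌋) := by
  have he0 := inv_beta_pos n
  change Lam n (Int.fract (x + betaStar n)) (Int.fract y) = _
  rw [betaStar_eq, ← sub_eq_add_neg, fract_sub_eq_of_le he0.le hx hx1,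
    Int.fract_eq_self.2 ⟨hy0, hy1⟩, Lam_eq hn (by linarith) (by linarith) hy0 hy1,
    show β * (x - β⁻¹) + y - β⁻¹ = β * x + y - β⁻¹ - 1 by linear_combination -beta_mul_inv n,
    Int.floor_sub_one, sub_add_cancel]
  exact Prod.ext rfl (Prod.ext (if_congr (by constructor <;> intro <;> linarith) rfl rfl) rfl)

lemma left_TileAt_of_lt (hn : 1 ≤ n) {x y : ℝ} (hx0 : 0 ≤ x) (hx : x < β⁻¹) (hy0 : 0 ≤ y)
    (hy1 : y < 1) :
    left (TileAt n x y) =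
      (if β⁻¹ ≤ y then 1 else 0, if β⁻¹ ≤ β * y + x then 1 else 0, n + ⌊β * x + y⌋) := by
  have he1 := inv_beta_lt_one hn
  change Lam n (Int.fract (x + betaStar n)) (Int.fract y) = _
  rw [betaStar_eq, ← sub_eq_add_neg, fract_sub_eq_of_lt hx0 hx he1.le,
    Int.fract_eq_self.2 ⟨hy0, hy1⟩, Lam_eq hn (by linarith) (by linarith) hy0 hy1,
    show β * (x + 1 - β⁻¹) + y - β⁻¹ = β * x + y + ((n - 1 : ℤ) : ℝ) by
      push_cast; linear_combination beta_eq_add_inv n - beta_mul_inv n,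
    Int.floor_add_intCast]
  exact Prod.ext rfl (Prod.ext (if_congr (by constructor <;> intro <;> linarith) rfl rfl) (by ring))

lemma add_le_beta_mul (hn : 0 ≤ n) {x y : ℝ} (hy : 0 ≤ y) : β * x + y ≤ β * (β * y + x) := by
  have h : β * (β * y + x) - (β * x + y) = n * β * y := by
    linear_combination (β * y) * beta_eq_add_inv n + y * beta_mul_inv n
  have : (0 : ℝ) ≤ n * β * y :=
    mul_nonneg (mul_nonneg (by exact_mod_cast hn) (beta_pos n).le) hy
  linarith

lemma one_le_beta_mul {x : ℝ} (hx : β⁻¹ ≤ x) : 1 ≤ β * x :=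
  (beta_mul_inv n).symm.trans_le (mul_le_mul_of_nonneg_left hx (beta_pos n).le)

lemma TileAt_mem_whiteT (hn : 1 ≤ n) {x y : ℝ} (hx : β⁻¹ ≤ x) (hx1 : x < 1) (hy : β⁻¹ ≤ y)
    (hy1 : y < 1) : TileAt n x y ∈ whiteT n := by
  have he0 := inv_beta_pos n
  have hβ := beta_eq_add_inv n
  have hβx := one_le_beta_mul hx
  have hβy := one_le_beta_mul hy
  have hβx1 : β * x < β := mul_lt_of_lt_one_right (beta_pos n) hx1
  have hβy1 : β * y < β := mul_lt_of_lt_one_right (beta_pos n) hy1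
  refine ⟨⌊β * x + y - β⁻¹⌋, ⌊β * y + x - β⁻¹⌋, Int.le_floor.2 ?_, Int.floor_le_iff.2 ?_,
    Int.le_floor.2 ?_, Int.floor_le_iff.2 ?_, ?_⟩
  any_goals push_cast; linarith
  rw [TileAt_eq_right_left, right_TileAt hn (by linarith) hx1 (by linarith) hy1,
    right_TileAt hn (by linarith) hy1 (by linarith) hx1,
    left_TileAt_of_le hn hx hx1 (by linarith) hy1,
    left_TileAt_of_le hn hy hy1 (by linarith) hx1]
  split_ifs <;> first | rfl | linarith

lemma TileAt_mem_horizontal (hn : 1 ≤ n) {x y : ℝ} (hx : β⁻¹ ≤ x) (hx1 : x < 1) (hy0 : 0 ≤ y)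
    (hy : y < β⁻¹) : TileAt n x y ∈ blueHT n ∪ yellowH n ∪ greenH n := by
  have hβ := beta_eq_add_inv n
  have hβx := one_le_beta_mul hx
  have hβx1 : β * x < β := mul_lt_of_lt_one_right (beta_pos n) hx1
  have hβy0 : 0 ≤ β * y := mul_nonneg (beta_pos n).le hy0
  have hβy1 : β * y < 1 := (mul_lt_mul_of_pos_left hy (beta_pos n)).trans_eq (beta_mul_inv n)
  have hsy := add_le_beta_mul (by omega : 0 ≤ n) (x := x) hy0
  rw [TileAt_eq_right_left, right_TileAt hn (by linarith) hx1 hy0 (by linarith),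
    right_TileAt hn hy0 (by linarith) (by linarith) hx1,
    left_TileAt_of_le hn hx hx1 hy0 (by linarith),
    left_TileAt_of_lt hn hy0 hy (by linarith) hx1,
    floor_eq_ite_of_nonneg_of_lt_two (a := β * y + x - β⁻¹) (by linarith) (by linarith),
    floor_eq_ite_of_nonneg_of_lt_two (a := β * y + x) (by linarith) (by linarith),
    if_neg (not_le.2 hy), if_pos hx, if_pos (by linarith : 1 ≤ β * x + y),
    if_pos (by linarith : β⁻¹ ≤ β * x + y)]
  simp only [le_sub_iff_add_le]
  refine mem_horizontal_of_ite (fun h ↦ by linarith) (Int.le_floor.2 ?_) (Int.floor_le_iff.2 ?_)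
    (fun h ↦ Int.floor_le_iff.2 ?_) (fun h ↦ Int.le_floor.2 ?_) <;> push_cast <;> nlinarith

lemma TileAt_mem_junctionT (hn : 1 ≤ n) {x y : ℝ} (hx0 : 0 ≤ x) (hx : x < β⁻¹) (hy0 : 0 ≤ y)
    (hy : y < β⁻¹) : TileAt n x y ∈ junctionT n := by
  have he1 := inv_beta_lt_one hn
  have hβx1 : β * x < 1 := (mul_lt_mul_of_pos_left hx (beta_pos n)).trans_eq (beta_mul_inv n)
  have hβy1 : β * y < 1 := (mul_lt_mul_of_pos_left hy (beta_pos n)).trans_eq (beta_mul_inv n)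
  have hβx0 : 0 ≤ β * x := mul_nonneg (beta_pos n).le hx0
  have hβy0 : 0 ≤ β * y := mul_nonneg (beta_pos n).le hy0
  have hsx := add_le_beta_mul (by omega : 0 ≤ n) (x := x) hy0
  have hsy := add_le_beta_mul (by omega : 0 ≤ n) (x := y) hx0
  rw [TileAt_eq_right_left, right_TileAt hn hx0 (by linarith) hy0 (by linarith),
    right_TileAt hn hy0 (by linarith) hx0 (by linarith),
    left_TileAt_of_lt hn hx0 hx hy0 (by linarith),
    left_TileAt_of_lt hn hy0 hy hx0 (by linarith),
    floor_add_one_eq_ite (a := β * x + y - β⁻¹) (by linarith) (by linarith),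
    floor_add_one_eq_ite (a := β * y + x - β⁻¹) (by linarith) (by linarith),
    floor_eq_ite_of_nonneg_of_lt_two (a := β * x + y) (by linarith) (by linarith),
    floor_eq_ite_of_nonneg_of_lt_two (a := β * y + x) (by linarith) (by linarith),
    if_neg (not_le.2 hx), if_neg (not_le.2 hy)]
  simp only [sub_nonneg]
  refine mem_junctionT_of_ite ?_ ?_ ?_ ?_ <;> intro h <;> nlinarith [beta_mul_inv n]

lemma TileAt_mem_TsetExplicit (hn : 1 ≤ n) {x y : ℝ} (hx0 : 0 ≤ x) (hx1 : x < 1) (hy0 : 0 ≤ y)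
    (hy1 : y < 1) : TileAt n x y ∈ TsetExplicit n := by
  simp only [TsetExplicit, Set.mem_union]
  rcases lt_or_ge x β⁻¹ with hx | hx <;> rcases lt_or_ge y β⁻¹ with hy | hy
  · exact Or.inr (TileAt_mem_junctionT hn hx0 hx hy0 hy)
  · have h := Set.mem_image_of_mem reflect (TileAt_mem_horizontal hn hy hy1 hx0 hx)
    simp only [Set.image_union, Set.mem_union] at h
    tauto
  · have h := TileAt_mem_horizontal hn hx hx1 hy0 hy
    simp only [Set.mem_union] at h
    tauto
  · exact Or.inl (Or.inl (Or.inl (Or.inl (Or.inl (Or.inl (Or.inl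
      (TileAt_mem_whiteT hn hx hx1 hy hy1)))))))

end Labels

theorem statement11_general (n : ℤ) (hn : 1 ≤ n) (x y : ℝ) :
    ∀ i j : ℤ,
      TileAt n (x + (i : ℝ) * (beta n)⁻¹) (y + (j : ℝ) * (beta n)⁻¹) ∈ TsetExplicit n ∧
      right (TileAt n (x + (i : ℝ) * (beta n)⁻¹) (y + (j : ℝ) * (beta n)⁻¹)) =
        left (TileAt n (x + ((i : ℝ) + 1) * (beta n)⁻¹) (y + (j : ℝ) * (beta n)⁻¹)) ∧
      top (TileAt n (x + (i : ℝ) * (beta n)⁻¹) (y + (j : ℝ) * (beta n)⁻¹)) =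
        bottom (TileAt n (x + (i : ℝ) * (beta n)⁻¹) (y + ((j : ℝ) + 1) * (beta n)⁻¹)) := by
  intro i j
  refine ⟨?_, ?_, ?_⟩
  · rw [← TileAt_fract]
    exact TileAt_mem_TsetExplicit hn (Int.fract_nonneg _) (Int.fract_lt_one _)
      (Int.fract_nonneg _) (Int.fract_lt_one _)
  · rw [add_one_mul, ← add_assoc]
    exact right_TileAt_eq_left n _ _
  -- top and bottom of `TILE(x, y)` are right and left of `TILE(y, x)`
  · rw [add_one_mul, ← add_assoc]
    exact right_TileAt_eq_left n _ _

/-- For every (x,y) ∈ [0,1]², the configuration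
c_(x,y)(i,j) = TILE_n(x + iβ⁻¹, y + jβ⁻¹) is a valid tiling of the plane by 𝒯_n. -/
theorem statement11 (n : ℤ) (hn : 1 ≤ n) (x y : ℝ)
    (hx : x ∈ Set.Icc (0 : ℝ) 1) (hy : y ∈ Set.Icc (0 : ℝ) 1) :
    ∀ i j : ℤ,
      TileAt n (x + (i : ℝ) * (beta n)⁻¹) (y + (j : ℝ) * (beta n)⁻¹) ∈ TsetExplicit n ∧
      right (TileAt n (x + (i : ℝ) * (beta n)⁻¹) (y + (j : ℝ) * (beta n)⁻¹)) =
        left (TileAt n (x + ((i : ℝ) + 1) * (beta n)⁻¹) (y + (j : ℝ) * (beta n)⁻¹)) ∧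
      top (TileAt n (x + (i : ℝ) * (beta n)⁻¹) (y + (j : ℝ) * (beta n)⁻¹)) =
        bottom (TileAt n (x + (i : ℝ) * (beta n)⁻¹) (y + ((j : ℝ) + 1) * (beta n)⁻¹)) :=
  statement11_general n hn x y
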